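/- arXiv:1108.2806 — 4 statements merged into one kernel-verified Lean document; each statement's English description precedes it below -/
import Mathlib

section
/- A vector space V is a unimodular stable right g*⋊g-module (i.e. Σ_i (v·X_i)◁θ^i = 0) if and only if the twisted module V ⊗ ℂ_δ, where the g-action is deformed by the trace character δ of the adjoint representation, is a stable right g*⋊g-module (i.e. Σ_i ((v⊗1)◁θ^i)·X_i = 0). -/
/-!
Evaluating the compatibility relation at `j = t = i` and summing over `i` gives
`Σ_i (v·X_i) ◁ θ^i = Σ_i (v ◁ θ^i)·X_i - Σ_k (Σ_i C i i k) v ◁ θ^k`, and by antisymmetry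
`Σ_i C i i k = -δ(X_k)`; so the unimodular stability sum of `V` is the stability sum of
`V ⊗ ℂ_δ`. Shifting `ρ` by the scalars `δ j` does not change the compatibility relation,
since scalars commute with every `s t`.
-/

open Finset

theorem mul_add_eq_add_mul_sub_iff {A : Type*} [Ring A] {s r z d : A} (hz : Commute s z) :
    s * (r + z) = (r + z) * s - d ↔ s * r = r * s - d := by
  rw [mul_add, add_mul, hz.eq, add_sub_right_comm, add_left_inj]

section

variable {R ι V : Type*} [CommRing R] [Fintype ι] [AddCommGroup V] [Module R V]

theorem compat_add_smul_one_iff (C : ι → ι → ι → R) (ρ s : ι → Module.End R V) (δ : ι → R) :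
    (∀ j t, s t * (ρ j + δ j • 1) = (ρ j + δ j • 1) * s t - ∑ k, C t j k • s k) ↔
      ∀ j t, s t * ρ j = ρ j * s t - ∑ k, C t j k • s k :=
  forall₂_congr fun j t =>
    mul_add_eq_add_mul_sub_iff ((Commute.one_right (s t)).smul_right (δ j))

theorem sum_apply_apply_eq_of_compat (C : ι → ι → ι → R) (ρ s : ι → Module.End R V)
    (hcompat : ∀ i, s i * ρ i = ρ i * s i - ∑ k, C i i k • s k) (v : V) :
    ∑ i, s i (ρ i v) = ∑ i, ρ i (s i v) - ∑ k, (∑ i, C i i k) • s k v := by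
  have hdiag (i : ι) : s i (ρ i v) = ρ i (s i v) - ∑ k, C i i k • s k v := by
    simpa using LinearMap.congr_fun (hcompat i) v
  simp only [hdiag, sum_sub_distrib, sum_smul]
  rw [sum_comm (γ := ι)]

theorem sum_diag_eq_neg_sum_of_antisymm (C : ι → ι → ι → R)
    (hanti : ∀ k j l, C k j l = -C k l j) (k : ι) :
    ∑ i, C i i k = -∑ i, C i k i := by
  rw [← sum_neg_distrib]
  exact sum_congr rfl fun i _ => hanti i i k

theorem sum_twist_apply_eq_sum_apply_apply (C : ι → ι → ι → R)
    (hanti : ∀ k j l, C k j l = -C k l j) (ρ s : ι → Module.End R V)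
    (hcompat : ∀ i, s i * ρ i = ρ i * s i - ∑ k, C i i k • s k) (v : V) :
    ∑ i, (ρ i + (∑ k, C k i k) • 1) (s i v) = ∑ i, s i (ρ i v) := by
  simp only [sum_apply_apply_eq_of_compat C ρ s hcompat, sum_diag_eq_neg_sum_of_antisymm C hanti,
    neg_smul, sum_neg_distrib, sub_neg_eq_add, LinearMap.add_apply, LinearMap.smul_apply, Module.End.one_apply,
    sum_add_distrib]

end

/-- The right `g`-action is `v·X_j = ρ j v`, the `S(g*)`-action is `v ◁ θ^t = s t v`, and the
structure constants are `[X_j, X_l] = Σ_k C k j l • X_k`; the `g* ⋊ g`-module compatibility is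
`(v·X_j) ◁ θ^t = v ◁ (X_j ▷ θ^t) + (v ◁ θ^t)·X_j` with `X_j ▷ θ^t = -Σ_k C t j k θ^k`. -/
theorem unimodular_stable_iff_twist_stable_general
    (N : ℕ) (C : Fin N → Fin N → Fin N → ℂ)
    (hC_anti : ∀ k j l, C k j l = -C k l j)
    (V : Type) [AddCommGroup V] [Module ℂ V]
    (ρ s : Fin N → Module.End ℂ V)
    -- the trace character of the adjoint representation:
    (δ : Fin N → ℂ) (hδ : ∀ j, δ j = ∑ k, C k j k)
    -- the twisted action on `V ⊗ ℂ_δ`: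
    (ρδ : Fin N → Module.End ℂ V) (hρδ : ∀ j, ρδ j = ρ j + δ j • 1) :
    -- `V` is a unimodular stable right `g* ⋊ g`-module
    ((∀ j t, s t * ρ j = ρ j * s t - ∑ k, C t j k • s k) ∧
      (∀ v, ∑ i, s i (ρ i v) = 0))
    ↔ -- iff `V ⊗ ℂ_δ` is a stable right `g* ⋊ g`-module
    ((∀ j t, s t * ρδ j = ρδ j * s t - ∑ k, C t j k • s k) ∧
      (∀ v, ∑ i, ρδ i (s i v) = 0)) := by
  obtain rfl : δ = fun j => ∑ k, C k j k := funext hδ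
  obtain rfl : ρδ = fun j => ρ j + (∑ k, C k j k) • 1 := funext hρδ
  rw [compat_add_smul_one_iff]
  refine and_congr_right fun hcompat => forall_congr' fun v => ?_
  rw [sum_twist_apply_eq_sum_apply_apply C hC_anti ρ s (fun i => hcompat i i)]

/-- `V` is a unimodular stable right `g* ⋊ g`-module iff the twisted module
`V ⊗ ℂ_δ` (the `g`-action deformed by the trace character `δ(X) = tr(ad X)`, the `S(g*)`-action
unchanged) is a stable right `g* ⋊ g`-module.  Everything is expressed through a basis
`X_1,...,X_N` of `g` with structure constants `[X_j, X_l] = Σ_k C k j l • X_k`: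
the right `g`-action is `v·X_j = ρ j v`, the `S(g*)`-action is `v ◁ θ^t = s t v`,
the `g* ⋊ g`-module compatibility is `(v·X_j) ◁ θ^t = v ◁ (X_j ▷ θ^t) + (v ◁ θ^t)·X_j`
with `X_j ▷ θ^t = -Σ_k C t j k θ^k`, unimodular stability is `Σ_i (v·X_i) ◁ θ^i = 0`
and stability is `Σ_i (v ◁ θ^i)·X_i = 0`. -/
theorem unimodular_stable_iff_twist_stable
    (N : ℕ) (C : Fin N → Fin N → Fin N → ℂ)
    (hC_anti : ∀ k j l, C k j l = -C k l j)
    (hC_jacobi : ∀ a b c d,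
      ∑ e, (C e b c * C d e a + C e c a * C d e b + C e a b * C d e c) = 0)
    (V : Type) [AddCommGroup V] [Module ℂ V]
    (ρ s : Fin N → Module.End ℂ V)
    -- `ρ` is a right `g`-module structure and `s` a right `S(g*)`-module structure:
    (hρ : ∀ j l, ∑ k, C k j l • ρ k = ρ l * ρ j - ρ j * ρ l)
    (hs : ∀ i j, s i * s j = s j * s i)
    -- the trace character of the adjoint representation:
    (δ : Fin N → ℂ) (hδ : ∀ j, δ j = ∑ k, C k j k)
    -- the twisted action on `V ⊗ ℂ_δ`:
    (ρδ : Fin N → Module.End ℂ V) (hρδ : ∀ j, ρδ j = ρ j + δ j • 1) :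
    -- `V` is a unimodular stable right `g* ⋊ g`-module
    ((∀ j t, s t * ρ j = ρ j * s t - ∑ k, C t j k • s k) ∧
      (∀ v, ∑ i, s i (ρ i v) = 0))
    ↔ -- iff `V ⊗ ℂ_δ` is a stable right `g* ⋊ g`-module
    ((∀ j t, s t * ρδ j = ρδ j * s t - ∑ k, C t j k • s k) ∧
      (∀ v, ∑ i, ρδ i (s i v) = 0)) :=
  unimodular_stable_iff_twist_stable_general N C hC_anti V ρ s δ hδ ρδ hρδ
end

section
/- If ∇: V → U(g) ⊗ V is a left comodule structure over the Hopf algebra U(g), then the composition (π ⊗ id)∘∇ with the canonical projection π: U(g) → g (onto the degree-one part in the filtration, killing 1 and higher symmetric components) defines a left g-comodule structure on V, i.e. its two-fold iteration lands in symmetric tensors. -/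
open TensorProduct

/-- If `∇ : V → U(g) ⊗ V` is a left comodule structure over the (cocommutative)
Hopf algebra `U(g)` (with comultiplication `Δ`, counit `ε`), then `(π ⊗ id) ∘ ∇`, where
`π : U(g) → g` is the canonical projection determined by the PBW decomposition (sending `1`
and the higher symmetric components to `0` and each `X ∈ g` to itself), is a left
`g`-comodule structure on `V`: its two-fold iteration lands in symmetric tensors. -/
theorem induced_g_comodule_of_U_comodule
    (L : Type) [LieRing L] [LieAlgebra ℂ L] [FiniteDimensional ℂ L]
    (V : Type) [AddCommGroup V] [Module ℂ V]
    -- the comultiplication and counit of `U(g)`: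
    (Δ : UniversalEnvelopingAlgebra ℂ L →ₐ[ℂ]
      (UniversalEnvelopingAlgebra ℂ L) ⊗[ℂ] (UniversalEnvelopingAlgebra ℂ L))
    (ε : UniversalEnvelopingAlgebra ℂ L →ₐ[ℂ] ℂ)
    (hΔ : ∀ X : L, Δ (UniversalEnvelopingAlgebra.ι ℂ X)
      = (UniversalEnvelopingAlgebra.ι ℂ X) ⊗ₜ[ℂ] 1 + 1 ⊗ₜ[ℂ] (UniversalEnvelopingAlgebra.ι ℂ X))
    (hε : ∀ X : L, ε (UniversalEnvelopingAlgebra.ι ℂ X) = 0)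
    (hcoassoc : (TensorProduct.map Δ.toLinearMap LinearMap.id) ∘ₗ Δ.toLinearMap
      = (TensorProduct.assoc ℂ _ _ _).symm.toLinearMap
          ∘ₗ (TensorProduct.map LinearMap.id Δ.toLinearMap) ∘ₗ Δ.toLinearMap)
    (hcocomm : (TensorProduct.comm ℂ _ _).toLinearMap ∘ₗ Δ.toLinearMap = Δ.toLinearMap)
    -- the canonical projection `π : U(g) → g`:
    (π : UniversalEnvelopingAlgebra ℂ L →ₗ[ℂ] L)
    (hπι : ∀ X : L, π (UniversalEnvelopingAlgebra.ι ℂ X) = X)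
    (hπ1 : π 1 = 0)
    (hπsym : ∀ X Y : L,
      π (UniversalEnvelopingAlgebra.ι ℂ X * UniversalEnvelopingAlgebra.ι ℂ Y
        + UniversalEnvelopingAlgebra.ι ℂ Y * UniversalEnvelopingAlgebra.ι ℂ X) = 0)
    -- `∇` is a left `U(g)`-comodule structure on `V`:
    (co : V →ₗ[ℂ] (UniversalEnvelopingAlgebra ℂ L) ⊗[ℂ] V)
    (hco_coassoc : (TensorProduct.map Δ.toLinearMap LinearMap.id) ∘ₗ co
      = (TensorProduct.assoc ℂ _ _ _).symm.toLinearMap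
          ∘ₗ (TensorProduct.map LinearMap.id co) ∘ₗ co)
    (hco_counit : (TensorProduct.lid ℂ V).toLinearMap
        ∘ₗ (TensorProduct.map ε.toLinearMap LinearMap.id) ∘ₗ co = LinearMap.id)
    -- the induced `g`-coaction:
    (cog : V →ₗ[ℂ] L ⊗[ℂ] V)
    (hcog : cog = (TensorProduct.map π LinearMap.id) ∘ₗ co) :
    -- the two `g`-legs of the iterated coaction are symmetric:
    (TensorProduct.map ((TensorProduct.comm ℂ L L).toLinearMap) LinearMap.id) ∘ₗ
        (TensorProduct.assoc ℂ L L V).symm.toLinearMap ∘ₗ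
        (TensorProduct.map LinearMap.id cog) ∘ₗ cog
      = (TensorProduct.assoc ℂ L L V).symm.toLinearMap ∘ₗ
        (TensorProduct.map LinearMap.id cog) ∘ₗ cog := by
  have step1 : (TensorProduct.map LinearMap.id cog) ∘ₗ cog
      = (TensorProduct.map π (TensorProduct.map π LinearMap.id)) ∘ₗ
        (TensorProduct.map LinearMap.id co) ∘ₗ co := by
    rw [hcog]
    conv_lhs => rw [← LinearMap.comp_assoc, ← TensorProduct.map_comp,
      LinearMap.id_comp, LinearMap.comp_id]
    conv_rhs => rw [← LinearMap.comp_assoc, ← TensorProduct.map_comp, LinearMap.comp_id]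
  have step2 : (TensorProduct.assoc ℂ L L V).symm.toLinearMap ∘ₗ
        (TensorProduct.map π (TensorProduct.map π LinearMap.id))
      = (TensorProduct.map (TensorProduct.map π π) LinearMap.id) ∘ₗ
        (TensorProduct.assoc ℂ _ _ V).symm.toLinearMap := by
    ext a b c
    simp
  have main : (TensorProduct.assoc ℂ L L V).symm.toLinearMap ∘ₗ
        (TensorProduct.map LinearMap.id cog) ∘ₗ cog
      = (TensorProduct.map ((TensorProduct.map π π) ∘ₗ Δ.toLinearMap) LinearMap.id) ∘ₗ co := by
    rw [step1, ← LinearMap.comp_assoc, step2, LinearMap.comp_assoc, ← hco_coassoc,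
      ← LinearMap.comp_assoc, ← TensorProduct.map_comp, LinearMap.comp_id]
  have key : (TensorProduct.comm ℂ L L).toLinearMap ∘ₗ
        (TensorProduct.map π π) ∘ₗ Δ.toLinearMap
      = (TensorProduct.map π π) ∘ₗ Δ.toLinearMap := by
    have hA : (TensorProduct.comm ℂ L L).toLinearMap ∘ₗ (TensorProduct.map π π)
        = (TensorProduct.map π π) ∘ₗ (TensorProduct.comm ℂ _ _).toLinearMap := by
      ext a b
      simp
    rw [← LinearMap.comp_assoc, hA, LinearMap.comp_assoc, hcocomm]
  rw [main, ← LinearMap.comp_assoc, ← TensorProduct.map_comp, LinearMap.comp_id,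
    key]
end

section
/- If M and N are right-left anti-Yetter–Drinfeld modules over a Lie algebra g, then M ⊗ N is an anti-Yetter–Drinfeld module over g with diagonal action (m⊗n)·X = m·X ⊗ n + m ⊗ n·X and coaction ∇(m⊗n) = m_{[-1]} ⊗ m_{[0]} ⊗ n + n_{[-1]} ⊗ m ⊗ n_{[0]}. -/
open TensorProduct

/-- If `M` and `N` are right-left anti-Yetter–Drinfeld modules over a Lie
algebra `g`, then `M ⊗ N` with the diagonal action `(m⊗n)·X = m·X ⊗ n + m ⊗ n·X` and the
coaction `∇(m⊗n) = m_{[-1]} ⊗ m_{[0]} ⊗ n + n_{[-1]} ⊗ m ⊗ n_{[0]}` is again a right-left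
anti-Yetter–Drinfeld module over `g`.  In terms of a basis `X_1,...,X_N` of `g` with structure
constants `[X_i, X_j] = Σ_t C t i j • X_t`, a right-left AYD module is given by a right action
`ρ` and a coaction `∇(v) = Σ_i X_i ⊗ s i v` satisfying the comodule symmetry
`s i ∘ s j = s j ∘ s i`, the right module property and the AYD condition
`∇(v·X) = v_{[-1]} ⊗ v_{[0]}·X + [v_{[-1]}, X] ⊗ v_{[0]}`. -/
theorem tensor_product_of_AYD_is_AYD
    (Nn : ℕ) (C : Fin Nn → Fin Nn → Fin Nn → ℂ)
    (hC_anti : ∀ k j l, C k j l = -C k l j)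
    (hC_jacobi : ∀ a b c d,
      ∑ e, (C e b c * C d e a + C e c a * C d e b + C e a b * C d e c) = 0)
    (M N : Type) [AddCommGroup M] [Module ℂ M] [AddCommGroup N] [Module ℂ N]
    (ρM sM : Fin Nn → Module.End ℂ M) (ρN sN : Fin Nn → Module.End ℂ N)
    -- right `g`-module structures:
    (hρM : ∀ j l, ∑ k, C k j l • ρM k = ρM l * ρM j - ρM j * ρM l)
    (hρN : ∀ j l, ∑ k, C k j l • ρN k = ρN l * ρN j - ρN j * ρN l)
    -- left `g`-comodule structures:
    (hsM : ∀ i j, sM i * sM j = sM j * sM i)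
    (hsN : ∀ i j, sN i * sN j = sN j * sN i)
    -- AYD conditions:
    (hM : ∀ j t, sM t * ρM j = ρM j * sM t + ∑ i, C t i j • sM i)
    (hN : ∀ j t, sN t * ρN j = ρN j * sN t + ∑ i, C t i j • sN i)
    -- the diagonal action and coaction on `M ⊗ N`:
    (ρT sT : Fin Nn → Module.End ℂ (M ⊗[ℂ] N))
    (hρT : ∀ j, ρT j
      = TensorProduct.map (ρM j) LinearMap.id + TensorProduct.map LinearMap.id (ρN j))
    (hsT : ∀ i, sT i
      = TensorProduct.map (sM i) LinearMap.id + TensorProduct.map LinearMap.id (sN i)) :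
    -- `M ⊗ N` is a right-left AYD module over `g`:
    (∀ j l, ∑ k, C k j l • ρT k = ρT l * ρT j - ρT j * ρT l) ∧
    (∀ i j, sT i * sT j = sT j * sT i) ∧
    (∀ j t, sT t * ρT j = ρT j * sT t + ∑ i, C t i j • sT i) := by
  have hmapR : ∀ f : Module.End ℂ M,
      TensorProduct.map f (LinearMap.id : N →ₗ[ℂ] N) = LinearMap.rTensor N f := fun _ => rfl
  have hmapL : ∀ g : Module.End ℂ N,
      TensorProduct.map (LinearMap.id : M →ₗ[ℂ] M) g = LinearMap.lTensor M g := fun _ => rfl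
  have hR : ∀ f g : Module.End ℂ M,
      LinearMap.rTensor N (f * g) = LinearMap.rTensor N f * LinearMap.rTensor N g := by
    intro f g
    rw [Module.End.mul_eq_comp, Module.End.mul_eq_comp, LinearMap.rTensor_comp]
  have hL : ∀ f g : Module.End ℂ N,
      LinearMap.lTensor M (f * g) = LinearMap.lTensor M f * LinearMap.lTensor M g := by
    intro f g
    rw [Module.End.mul_eq_comp, Module.End.mul_eq_comp, LinearMap.lTensor_comp]
  have hcomm : ∀ (f : Module.End ℂ M) (g : Module.End ℂ N),
      LinearMap.rTensor N f * LinearMap.lTensor M g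
        = LinearMap.lTensor M g * LinearMap.rTensor N f := by
    intro f g
    rw [Module.End.mul_eq_comp, Module.End.mul_eq_comp, LinearMap.rTensor_comp_lTensor,
      LinearMap.lTensor_comp_rTensor]
  have hRsum : ∀ (c : Fin Nn → ℂ) (f : Fin Nn → Module.End ℂ M),
      ∑ k, c k • LinearMap.rTensor N (f k) = LinearMap.rTensor N (∑ k, c k • f k) := by
    intro c f
    rw [show LinearMap.rTensor N (∑ k, c k • f k)
        = LinearMap.rTensorHom (R := ℂ) N (∑ k, c k • f k) from rfl, map_sum]
    simp
  have hLsum : ∀ (c : Fin Nn → ℂ) (f : Fin Nn → Module.End ℂ N),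
      ∑ k, c k • LinearMap.lTensor M (f k) = LinearMap.lTensor M (∑ k, c k • f k) := by
    intro c f
    rw [show LinearMap.lTensor M (∑ k, c k • f k)
        = LinearMap.lTensorHom (R := ℂ) M (∑ k, c k • f k) from rfl, map_sum]
    simp
  refine ⟨?_, ?_, ?_⟩
  · intro j l
    simp only [hρT, hmapR, hmapL, smul_add, Finset.sum_add_distrib, hRsum, hLsum, hρM j l,
      hρN j l, map_sub, hR, hL]
    have h1 := hcomm (ρM l) (ρN j)
    have h2 := hcomm (ρM j) (ρN l)
    noncomm_ring
    rw [h1, h2]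
    simp only [neg_one_zsmul, LinearMap.rTensor_add, LinearMap.rTensor_neg,
      LinearMap.lTensor_add, LinearMap.lTensor_neg, hR, hL]
    abel
  · intro i j
    simp only [hsT, hmapR, hmapL]
    have h1 := hcomm (sM i) (sN j)
    have h2 := hcomm (sM j) (sN i)
    have h3 : LinearMap.rTensor N (sM i) * LinearMap.rTensor N (sM j)
        = LinearMap.rTensor N (sM j) * LinearMap.rTensor N (sM i) := by
      rw [← hR, ← hR, hsM]
    have h4 : LinearMap.lTensor M (sN i) * LinearMap.lTensor M (sN j)
        = LinearMap.lTensor M (sN j) * LinearMap.lTensor M (sN i) := by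
      rw [← hL, ← hL, hsN]
    noncomm_ring
    rw [h1, h2, h3, h4]
    abel
  · intro j t
    simp only [hsT, hρT, hmapR, hmapL, smul_add, Finset.sum_add_distrib, hRsum, hLsum,
      hM j t, hN j t, map_add, hR, hL]
    have h1 := hcomm (sM t) (ρN j)
    have h2 := hcomm (ρM j) (sN t)
    have e1 : LinearMap.rTensor N (sM t) * LinearMap.rTensor N (ρM j)
        = LinearMap.rTensor N (ρM j) * LinearMap.rTensor N (sM t)
          + LinearMap.rTensor N (∑ i, C t i j • sM i) := by
      rw [← hR, hM j t, LinearMap.rTensor_add, hR]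
    have e2 : LinearMap.lTensor M (sN t) * LinearMap.lTensor M (ρN j)
        = LinearMap.lTensor M (ρN j) * LinearMap.lTensor M (sN t)
          + LinearMap.lTensor M (∑ i, C t i j • sN i) := by
      rw [← hL, hN j t, LinearMap.lTensor_add, hL]
    noncomm_ring
    rw [h1, h2, e1, e2]
    abel
end

section
/- Let V be a finite-dimensional right g-module and left g-comodule with action matrices B_j (defined by v^i·X_j = Σ_k (B_j)^i_k v^k) and coaction matrices A^j (defined by ∇(v^i) = Σ_{j,k} (A^j)^i_k X_j ⊗ v^k). Then: (i) the coaction condition holds iff the A^j pairwise commute; (ii) stability holds iff Σ_j A^j B_j = 0; (iii) the anti-Yetter–Drinfeld condition holds iff [B_q, A^j] = Σ_s A^s C^j_{sq} for all j, q; and all three conditions are independent of the choice of basis of g. -/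
/-!
Write the coaction as `v ↦ Σ_j X_j ⊗ (A^j)ᵀ v` (`matrixCoaction`). Every map occurring in (i)–(iii)
is again of this shape, for the basis `X_j ⊗ X_k` of `g ⊗ g` in (i), and since `(X_j)` is a basis
the matrix family is determined by the map. Each condition thus becomes an equality of matrix
families. Basis independence needs no matrix computation: the transformed data describe the same
action and coaction in the basis `Y_j = Σ_l γ^l_j X_l`, so both sides of each equivalence are
equivalent to the same basis-free condition.
-/

open TensorProduct
open scoped Matrix

section SumSmul

variable {R M ι κ : Type*} [CommSemiring R] [AddCommMonoid M] [Module R M] [Fintype ι] [Fintype κ]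

theorem sum_smul_sum_smul (c : ι → R) (P : ι → κ → R) (v : κ → M) :
    ∑ i, c i • ∑ k, P i k • v k = ∑ k, (∑ i, c i * P i k) • v k := by
  simp only [Finset.smul_sum, smul_smul, Finset.sum_smul]
  exact Finset.sum_comm

theorem sum_smul_sum_smul_of_mul_eq_one [DecidableEq ι] {P Q : Matrix ι ι R} (h : P * Q = 1)
    (v : ι → M) (l : ι) : ∑ j, P l j • ∑ k, Q j k • v k = v l := by
  rw [sum_smul_sum_smul (P l) Q v]
  simp only [← Matrix.mul_apply, h, Matrix.one_apply, ite_smul, one_smul, zero_smul,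
    Finset.sum_ite_eq, Finset.mem_univ, if_true]

end SumSmul

theorem TensorProduct.equivFinsuppOfBasisLeft_sum_tmul {R M N ι : Type*} [CommSemiring R]
    [AddCommMonoid M] [Module R M] [AddCommMonoid N] [Module R N] [Fintype ι] [DecidableEq ι]
    (b : Module.Basis ι R M) (w : ι → N) (i : ι) :
    equivFinsuppOfBasisLeft b (∑ j, b j ⊗ₜ[R] w j) i = w i := by
  simp [Finsupp.single_apply]

theorem Module.Basis.map_toLinearEquiv_apply {R M ι : Type*} [CommRing R] [AddCommGroup M]
    [Module R M] [Fintype ι] [DecidableEq ι] (b : Module.Basis ι R M) (γ : Matrix ι ι R)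
    (hγ : IsUnit γ.det) (j : ι) : b.map (Matrix.toLinearEquiv b γ hγ) j = ∑ l, γ l j • b l := by
  rw [Module.Basis.map_apply, Matrix.toLinearEquiv_apply, Matrix.toLin_self]

section MatrixCoaction

variable {R L L' ι κ m : Type*} [CommRing R] [AddCommGroup L] [Module R L] [AddCommGroup L']
  [Module R L'] [Fintype ι] [Fintype κ] [Fintype m] [DecidableEq m]

variable (R m) in
def matrixCoaction (e : ι → L) : (ι → Matrix m m R) →ₗ[R] (m → R) →ₗ[R] L ⊗[R] (m → R) where
  toFun A := ∑ j, TensorProduct.mk R L (m → R) (e j) ∘ₗ Matrix.toLin' (A j)ᵀ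
  map_add' A A' := by
    simp only [Pi.add_apply, Matrix.transpose_add, map_add, LinearMap.comp_add,
      Finset.sum_add_distrib]
  map_smul' c A := by
    simp only [Pi.smul_apply, Matrix.transpose_smul, map_smul, LinearMap.comp_smul,
      Finset.smul_sum, RingHom.id_apply]

@[simp]
theorem matrixCoaction_apply (e : ι → L) (A : ι → Matrix m m R) (v : m → R) :
    matrixCoaction R m e A v = ∑ j, e j ⊗ₜ ((A j)ᵀ *ᵥ v) := by
  simp [matrixCoaction]

theorem matrixCoaction_injective [DecidableEq ι] (b : Module.Basis ι R L) :
    Function.Injective (matrixCoaction R m b) := by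
  rw [← LinearMap.ker_eq_bot, LinearMap.ker_eq_bot']
  intro A hA
  funext j
  have hmulVec (v : m → R) : Matrix.toLin' (A j)ᵀ v = 0 := by
    simpa only [matrixCoaction_apply, equivFinsuppOfBasisLeft_sum_tmul, LinearMap.zero_apply,
      Matrix.toLin'_apply, map_zero, Finsupp.coe_zero, Pi.zero_apply]
      using congr(equivFinsuppOfBasisLeft b ($hA v) j)
  have hzero : Matrix.toLin' (A j)ᵀ = 0 := LinearMap.ext hmulVec
  simpa using hzero

theorem assoc_symm_comp_map_matrixCoaction (e : ι → L) (e' : κ → L') (A : ι → Matrix m m R)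
    (A' : κ → Matrix m m R) :
    (TensorProduct.assoc R L L' (m → R)).symm.toLinearMap ∘ₗ
        TensorProduct.map LinearMap.id (matrixCoaction R m e' A') ∘ₗ matrixCoaction R m e A =
      matrixCoaction R m (fun p : ι × κ => e p.1 ⊗ₜ e' p.2) (fun p => A p.1 * A' p.2) := by
  refine LinearMap.ext fun v => ?_
  simp [Fintype.sum_prod_type, tmul_sum, Matrix.transpose_mul, Matrix.mulVec_mulVec]

theorem map_comm_comp_matrixCoaction (e : ι → L) (e' : κ → L') (A : ι × κ → Matrix m m R) :
    TensorProduct.map (TensorProduct.comm R L L').toLinearMap LinearMap.id ∘ₗ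
        matrixCoaction R m (fun p : ι × κ => e p.1 ⊗ₜ e' p.2) A =
      matrixCoaction R m (fun p : κ × ι => e' p.1 ⊗ₜ e p.2) (fun p => A p.swap) := by
  refine LinearMap.ext fun v => ?_
  simp only [LinearMap.comp_apply, matrixCoaction_apply, Fintype.sum_prod_type, map_sum, map_tmul,
    LinearEquiv.coe_coe, comm_tmul, LinearMap.id_apply, Prod.swap_prod_mk]
  exact Finset.sum_comm

theorem matrixCoaction_coaction_iff_commute [DecidableEq ι] (b : Module.Basis ι R L)
    (A : ι → Matrix m m R) :
    TensorProduct.map (TensorProduct.comm R L L).toLinearMap LinearMap.id ∘ₗ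
        (TensorProduct.assoc R L L (m → R)).symm.toLinearMap ∘ₗ
        TensorProduct.map LinearMap.id (matrixCoaction R m b A) ∘ₗ matrixCoaction R m b A =
      (TensorProduct.assoc R L L (m → R)).symm.toLinearMap ∘ₗ
        TensorProduct.map LinearMap.id (matrixCoaction R m b A) ∘ₗ matrixCoaction R m b A ↔
    ∀ j k, A j * A k = A k * A j := by
  have hbb : (fun p : ι × ι => b p.1 ⊗ₜ b p.2) = ⇑(b.tensorProduct b) :=
    funext fun p => (b.tensorProduct_apply b p.1 p.2).symm
  rw [assoc_symm_comp_map_matrixCoaction, map_comm_comp_matrixCoaction, hbb,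
    (matrixCoaction_injective _).eq_iff]
  simp only [funext_iff, Prod.forall, Prod.fst_swap, Prod.snd_swap]
  exact ⟨fun h j k => h k j, fun h j k => h k j⟩

theorem lift_comp_matrixCoaction {e : ι → L} {ρ : L →ₗ[R] Module.End R (m → R)}
    {B : ι → Matrix m m R} (hρ : ∀ j, ρ (e j) = Matrix.toLin' (B j)ᵀ) (A : ι → Matrix m m R) :
    TensorProduct.lift ρ ∘ₗ matrixCoaction R m e A = Matrix.toLin' (∑ j, A j * B j)ᵀ := by
  refine LinearMap.ext fun v => ?_
  simp [hρ, Matrix.transpose_sum, Matrix.transpose_mul, Matrix.mulVec_mulVec]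

theorem matrixCoaction_stable_iff {e : ι → L} {ρ : L →ₗ[R] Module.End R (m → R)}
    {B : ι → Matrix m m R} (hρ : ∀ j, ρ (e j) = Matrix.toLin' (B j)ᵀ) (A : ι → Matrix m m R) :
    TensorProduct.lift ρ ∘ₗ matrixCoaction R m e A = 0 ↔ ∑ j, A j * B j = 0 := by
  rw [lift_comp_matrixCoaction hρ, LinearEquiv.map_eq_zero_iff, Matrix.transpose_eq_zero]

end MatrixCoaction

theorem ayd_condition_iff_forall_basis {R L V ι : Type*} [CommRing R] [LieRing L]
    [LieAlgebra R L] [AddCommGroup V] [Module R V] (b : Module.Basis ι R L)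
    (ρ : L →ₗ[R] Module.End R V) (co : V →ₗ[R] L ⊗[R] V) :
    (∀ X, co ∘ₗ ρ X = TensorProduct.map LinearMap.id (ρ X) ∘ₗ co -
        TensorProduct.map (LieAlgebra.ad R L X) LinearMap.id ∘ₗ co) ↔
      ∀ i, co ∘ₗ ρ (b i) = TensorProduct.map LinearMap.id (ρ (b i)) ∘ₗ co -
        TensorProduct.map (LieAlgebra.ad R L (b i)) LinearMap.id ∘ₗ co := by
  refine ⟨fun h i => h (b i), fun h X => ?_⟩
  have hlin : LinearMap.llcomp R V V (L ⊗[R] V) co ∘ₗ ρ =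
      LinearMap.lcomp R (L ⊗[R] V) co ∘ₗ LinearMap.lTensorHom L ∘ₗ ρ -
        LinearMap.lcomp R (L ⊗[R] V) co ∘ₗ LinearMap.rTensorHom V ∘ₗ
          (LieAlgebra.ad R L : L →ₗ[R] Module.End R L) :=
    b.ext h
  exact LinearMap.congr_fun hlin X

section AYD

variable {R L ι m : Type*} [CommRing R] [LieRing L] [LieAlgebra R L] [Fintype ι] [Fintype m]
  [DecidableEq m]

theorem matrixCoaction_comp_toLin' (e : ι → L) (A : ι → Matrix m m R) (M : Matrix m m R) :
    matrixCoaction R m e A ∘ₗ Matrix.toLin' Mᵀ = matrixCoaction R m e (fun j => M * A j) := by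
  refine LinearMap.ext fun v => ?_
  simp [Matrix.transpose_mul, Matrix.mulVec_mulVec]

theorem map_toLin'_comp_matrixCoaction (e : ι → L) (A : ι → Matrix m m R) (M : Matrix m m R) :
    TensorProduct.map LinearMap.id (Matrix.toLin' Mᵀ) ∘ₗ matrixCoaction R m e A =
      matrixCoaction R m e (fun j => A j * M) := by
  refine LinearMap.ext fun v => ?_
  simp [Matrix.transpose_mul, Matrix.mulVec_mulVec]

theorem map_ad_comp_matrixCoaction {e : ι → L} {C : ι → ι → ι → R}
    (hC : ∀ s q, ⁅e s, e q⁆ = ∑ j, C j s q • e j) (A : ι → Matrix m m R) (q : ι) :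
    TensorProduct.map (LieAlgebra.ad R L (e q)) LinearMap.id ∘ₗ matrixCoaction R m e A =
      -matrixCoaction R m e (fun j => ∑ s, C j s q • A s) := by
  refine LinearMap.ext fun v => ?_
  simp only [LinearMap.comp_apply, matrixCoaction_apply, map_sum, map_tmul, LieAlgebra.ad_apply,
    ← lie_skew (e q), hC, neg_tmul, sum_tmul, smul_tmul, LinearMap.id_apply, LinearMap.neg_apply,
    Matrix.transpose_sum, Matrix.transpose_smul, Matrix.sum_mulVec, Matrix.smul_mulVec,
    tmul_sum, Finset.sum_neg_distrib]
  exact congrArg Neg.neg Finset.sum_comm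

theorem matrixCoaction_ayd_iff [DecidableEq ι] (b : Module.Basis ι R L) {C : ι → ι → ι → R}
    (hC : ∀ s q, ⁅b s, b q⁆ = ∑ j, C j s q • b j) {ρ : L →ₗ[R] Module.End R (m → R)}
    {B : ι → Matrix m m R} (hρ : ∀ j, ρ (b j) = Matrix.toLin' (B j)ᵀ) (A : ι → Matrix m m R) :
    (∀ X, matrixCoaction R m b A ∘ₗ ρ X =
        TensorProduct.map LinearMap.id (ρ X) ∘ₗ matrixCoaction R m b A -
          TensorProduct.map (LieAlgebra.ad R L X) LinearMap.id ∘ₗ matrixCoaction R m b A) ↔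
      ∀ q j, B q * A j - A j * B q = ∑ s, C j s q • A s := by
  rw [ayd_condition_iff_forall_basis b]
  refine forall_congr' fun q => ?_
  rw [hρ, matrixCoaction_comp_toLin', map_toLin'_comp_matrixCoaction,
    map_ad_comp_matrixCoaction hC, sub_neg_eq_add, ← map_add, (matrixCoaction_injective b).eq_iff,
    funext_iff]
  exact forall_congr' fun j => sub_eq_iff_eq_add'.symm

end AYD

section BasisChange

variable {R L ι m : Type*} [CommRing R] [Fintype ι] [Fintype m] [DecidableEq m]

theorem matrixCoaction_eq_of_eq_sum_smul [AddCommGroup L] [Module R L] {e e' : ι → L}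
    {γ : Matrix ι ι R} (he' : ∀ j, e' j = ∑ l, γ l j • e l) (A : ι → Matrix m m R) :
    matrixCoaction R m e' A = matrixCoaction R m e (fun l => ∑ j, γ l j • A j) := by
  refine LinearMap.ext fun v => ?_
  simp only [matrixCoaction_apply, he', sum_tmul, smul_tmul, Matrix.transpose_sum,
    Matrix.transpose_smul, Matrix.sum_mulVec, Matrix.smul_mulVec, tmul_sum]
  exact Finset.sum_comm

theorem lie_eq_sum_of_eq_sum_smul [DecidableEq ι] [LieRing L] [LieAlgebra R L] {e e' : ι → L}
    {C C' : ι → ι → ι → R} {γ δ : Matrix ι ι R} (hC : ∀ s q, ⁅e s, e q⁆ = ∑ j, C j s q • e j)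
    (hγδ : γ * δ = 1) (he' : ∀ j, e' j = ∑ l, γ l j • e l)
    (hC' : ∀ j s q, C' j s q = ∑ l, ∑ r, ∑ m, γ l s * γ m q * C r l m * δ j r) (s q : ι) :
    ⁅e' s, e' q⁆ = ∑ j, C' j s q • e' j := by
  set D : ι → R := fun r => ∑ l, ∑ m, γ l s * γ m q * C r l m
  have hlie : ⁅e' s, e' q⁆ = ∑ r, D r • e r := by
    simp only [he', sum_lie, lie_sum, smul_lie, lie_smul, hC, sum_smul_sum_smul, Finset.mul_sum, D]
    refine Finset.sum_congr rfl fun r _ => congrArg (· • e r) ?_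
    rw [Finset.sum_comm]
    exact Finset.sum_congr rfl fun l _ => Finset.sum_congr rfl fun m _ => by ring
  have hC'D : ∀ j, C' j s q = ∑ r, δ j r * D r := by
    intro j
    rw [hC', Finset.sum_comm]
    simp only [D, Finset.mul_sum]
    exact Finset.sum_congr rfl fun r _ => Finset.sum_congr rfl fun l _ =>
      Finset.sum_congr rfl fun m _ => by ring
  rw [hlie]
  simp only [he', sum_smul_sum_smul, hC'D]
  refine Finset.sum_congr rfl fun l _ => ?_
  congr 1
  simpa only [smul_eq_mul, mul_comm] using (sum_smul_sum_smul_of_mul_eq_one hγδ D l).symm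

end BasisChange

/-- For a finite dimensional right `g`-module and left `g`-comodule `V` with
action matrices `B_j` (`v^i·X_j = Σ_k (B_j)^i_k v^k`) and coaction matrices `A^j`
(`∇(v^i) = Σ_{j,k} (A^j)^i_k X_j ⊗ v^k`):
(i) the coaction condition holds iff the `A^j` pairwise commute;
(ii) stability holds iff `Σ_j A^j B_j = 0`;
(iii) the AYD condition holds iff `[B_q, A^j] = Σ_s A^s C^j_{sq}`;
and all three matrix conditions are independent of the choice of basis of `g`. -/
theorem matrix_conditions_for_SAYD
    (Nn n : ℕ) (L : Type) [LieRing L] [LieAlgebra ℂ L]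
    (b : Module.Basis (Fin Nn) ℂ L)
    (C : Fin Nn → Fin Nn → Fin Nn → ℂ)
    (hC : ∀ s q, ⁅b s, b q⁆ = ∑ j, C j s q • b j)
    (A B : Fin Nn → Matrix (Fin n) (Fin n) ℂ)
    -- the right action `ρ X` of `X ∈ g` on `V = ℂⁿ`, determined by the matrices `B_j`:
    (ρ : L →ₗ[ℂ] Module.End ℂ (Fin n → ℂ))
    (hρ : ∀ j, ρ (b j) = Matrix.toLin' (B j).transpose)
    -- the coaction `∇ : V → g ⊗ V`, determined by the matrices `A^j`:
    (co : (Fin n → ℂ) →ₗ[ℂ] L ⊗[ℂ] (Fin n → ℂ))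
    (hco : co = ∑ j, (TensorProduct.mk ℂ L (Fin n → ℂ) (b j)) ∘ₗ Matrix.toLin' (A j).transpose)
    -- the contraction `μ(Y ⊗ v) = v·Y` used to express stability:
    (μ : L ⊗[ℂ] (Fin n → ℂ) →ₗ[ℂ] (Fin n → ℂ))
    (hμ : μ = TensorProduct.lift ρ) :
    -- (i) the coaction condition (symmetry of the two `g`-legs of the iterated coaction):
    (((TensorProduct.map ((TensorProduct.comm ℂ L L).toLinearMap) LinearMap.id) ∘ₗ
        ((TensorProduct.assoc ℂ L L (Fin n → ℂ)).symm.toLinearMap) ∘ₗ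
        (TensorProduct.map LinearMap.id co) ∘ₗ co
      = ((TensorProduct.assoc ℂ L L (Fin n → ℂ)).symm.toLinearMap) ∘ₗ
        (TensorProduct.map LinearMap.id co) ∘ₗ co)
      ↔ (∀ j k, A j * A k = A k * A j)) ∧
    -- (ii) stability `v_{[0]}·v_{[-1]} = 0`:
    ((μ ∘ₗ co = 0) ↔ (∑ j, A j * B j = 0)) ∧
    -- (iii) the AYD condition `∇(v·X) = v_{[-1]} ⊗ v_{[0]}·X + [v_{[-1]}, X] ⊗ v_{[0]}`:
    ((∀ X : L, co ∘ₗ (ρ X)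
        = (TensorProduct.map LinearMap.id (ρ X)) ∘ₗ co
          - (TensorProduct.map ((LieAlgebra.ad ℂ L) X) LinearMap.id) ∘ₗ co)
      ↔ (∀ q j, B q * A j - A j * B q = ∑ s, C j s q • A s)) ∧
    -- basis independence: for any change of basis `Y_j = Σ_l γ^l_j X_l`, the three matrix
    -- conditions hold for the transformed data iff they hold for the original data:
    (∀ γ : Matrix (Fin Nn) (Fin Nn) ℂ, IsUnit γ.det →
      ∀ At Bt : Fin Nn → Matrix (Fin n) (Fin n) ℂ,
      ∀ Ct : Fin Nn → Fin Nn → Fin Nn → ℂ,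
      (∀ q, Bt q = ∑ l, γ l q • B l) →
      (∀ j, At j = ∑ l, γ⁻¹ j l • A l) →
      (∀ j s q, Ct j s q = ∑ l, ∑ r, ∑ m, γ l s * γ m q * C r l m * γ⁻¹ j r) →
      (((∀ j k, At j * At k = At k * At j) ↔ (∀ j k, A j * A k = A k * A j)) ∧
       ((∑ j, At j * Bt j = 0) ↔ (∑ j, A j * B j = 0)) ∧
       ((∀ q j, Bt q * At j - At j * Bt q = ∑ s, Ct j s q • At s)
          ↔ (∀ q j, B q * A j - A j * B q = ∑ s, C j s q • A s)))) := by
  obtain rfl : co = matrixCoaction ℂ (Fin n) b A := hco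
  subst hμ
  refine ⟨matrixCoaction_coaction_iff_commute b A, matrixCoaction_stable_iff hρ A,
    matrixCoaction_ayd_iff b hC hρ A, ?_⟩
  intro γ hγ At Bt Ct hBt hAt hCt
  set b' := b.map (Matrix.toLinearEquiv b γ hγ)
  have hb' : ∀ j, b' j = ∑ l, γ l j • b l := b.map_toLinearEquiv_apply γ hγ
  have hγγ := Matrix.mul_nonsing_inv γ hγ
  have hρ' : ∀ q, ρ (b' q) = Matrix.toLin' (Bt q)ᵀ := fun q => by
    simp [hb', hBt, hρ, Matrix.transpose_sum]
  have hC' := lie_eq_sum_of_eq_sum_smul hC hγγ hb' hCt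
  have hco' : matrixCoaction ℂ (Fin n) b A = matrixCoaction ℂ (Fin n) b' At := by
    rw [matrixCoaction_eq_of_eq_sum_smul hb']
    simp only [hAt, sum_smul_sum_smul_of_mul_eq_one hγγ]
  refine ⟨?_, ?_, ?_⟩
  · rw [← matrixCoaction_coaction_iff_commute b' At, ← matrixCoaction_coaction_iff_commute b A,
      hco']
  · rw [← matrixCoaction_stable_iff hρ' At, ← matrixCoaction_stable_iff hρ A, hco']
  · rw [← matrixCoaction_ayd_iff b' hC' hρ' At, ← matrixCoaction_ayd_iff b hC hρ A, hco']
end
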